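/- (Exact value of the sentential-logic best approximation and equality characterization in Proposition 1.) Let S be a nonempty finite set and let f* : S → ℝ satisfy f*(x) ∈ {0,1,2} for all x ∈ S. Then the infimum of GL(g, f*, S) over functions g : S → ℝ with values in {0,1} equals |{x ∈ S : f*(x) = 2}| / |S|, while the infimum of GL(g, f*, S) over functions g with values in {0,1,2} equals 0. Hence the two infima are equal if and only if f*(x) ∈ {0,1} for every x ∈ S, i.e., if and only if the underlying logic is not a formal partial logic. -/
import Mathlib


/-- Generalization loss: average absolute deviation from the target on a
nonempty finite set `S`. -/
noncomputable def genLoss {S : Type*} [Fintype S] (f fstar : S → ℝ) : ℝ :=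
  (1 / (Fintype.card S : ℝ)) * ∑ x, |f x - fstar x|

/-- Exact value of the best sentential-logic approximation and the equality
characterization: for a `{0,1,2}`-valued target, the best sentential-logic
(`{0,1}`-valued) loss equals the fraction of points where the target is `2`,
the best partial-logic (`{0,1,2}`-valued) loss equals `0`, and the two agree
iff the target takes values in `{0,1}` everywhere (i.e. the logic is not a
formal partial logic). -/
theorem sentential_best_value_and_equality {S : Type*} [Fintype S] [Nonempty S]
    (fstar : S → ℝ) (hstar : ∀ x, fstar x ∈ ({0, 1, 2} : Set ℝ)) :
    sInf {l : ℝ | ∃ g : S → ℝ, (∀ x, g x ∈ ({0, 1} : Set ℝ)) ∧ genLoss g fstar = l} =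
        (Nat.card {x : S // fstar x = 2} : ℝ) / (Fintype.card S : ℝ) ∧
      sInf {l : ℝ | ∃ g : S → ℝ, (∀ x, g x ∈ ({0, 1, 2} : Set ℝ)) ∧ genLoss g fstar = l} = 0 ∧
      (sInf {l : ℝ | ∃ g : S → ℝ, (∀ x, g x ∈ ({0, 1} : Set ℝ)) ∧ genLoss g fstar = l} =
          sInf {l : ℝ | ∃ g : S → ℝ, (∀ x, g x ∈ ({0, 1, 2} : Set ℝ)) ∧ genLoss g fstar = l} ↔
        ∀ x, fstar x ∈ ({0, 1} : Set ℝ)) := by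
  classical
  have hNpos : (0 : ℝ) < (Fintype.card S : ℝ) := by
    exact_mod_cast Fintype.card_pos
  have hcard : (Nat.card {x : S // fstar x = 2} : ℝ) =
      ((Finset.univ.filter (fun x => fstar x = 2)).card : ℝ) := by
    rw [Nat.card_eq_fintype_card, Fintype.card_subtype]
  -- first infimum
  have h1 : sInf {l : ℝ | ∃ g : S → ℝ, (∀ x, g x ∈ ({0, 1} : Set ℝ)) ∧ genLoss g fstar = l} =
      (Nat.card {x : S // fstar x = 2} : ℝ) / (Fintype.card S : ℝ) := by
    apply IsLeast.csInf_eq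
    constructor
    · refine ⟨fun x => if fstar x = 2 then 1 else fstar x, fun x => ?_, ?_⟩
      · by_cases h : fstar x = 2
        · simp [h]
        · rcases hstar x with h0 | h1 | h2
          · simp [h, h0]
          · simp [h, h1]
          · exact absurd h2 h
      · have hsum : ∑ x, |(if fstar x = 2 then 1 else fstar x) - fstar x| =
            ((Finset.univ.filter (fun x => fstar x = 2)).card : ℝ) := by
          rw [Finset.card_filter]
          push_cast
          apply Finset.sum_congr rfl
          intro x _
          by_cases h : fstar x = 2 <;> simp [h] <;> norm_num
        rw [genLoss, hsum, hcard]
        ring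
    · rintro l ⟨g, hg, rfl⟩
      rw [genLoss, hcard, div_eq_inv_mul, one_div]
      apply mul_le_mul_of_nonneg_left _ (by positivity)
      calc ((Finset.univ.filter (fun x => fstar x = 2)).card : ℝ)
          = ∑ x, (if fstar x = 2 then (1:ℝ) else 0) := by
            rw [Finset.card_filter]; push_cast; rfl
        _ ≤ ∑ x, |g x - fstar x| := by
            apply Finset.sum_le_sum
            intro x _
            by_cases h : fstar x = 2
            · rcases hg x with h0 | h1
              · rw [h, h0]; norm_num
              · simp only [Set.mem_singleton_iff] at h1
                rw [h, h1]; norm_num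
            · simp only [h, if_false]; exact abs_nonneg _
  have h2 : sInf {l : ℝ | ∃ g : S → ℝ, (∀ x, g x ∈ ({0, 1, 2} : Set ℝ)) ∧ genLoss g fstar = l}
      = 0 := by
    apply IsLeast.csInf_eq
    constructor
    · exact ⟨fstar, hstar, by simp [genLoss]⟩
    · rintro l ⟨g, hg, rfl⟩
      rw [genLoss]
      positivity
  refine ⟨h1, h2, ?_⟩
  rw [h1, h2, div_eq_zero_iff]
  constructor
  · rintro (h | h)
    · intro x
      rcases hstar x with h0 | h1 | h2
      · exact Or.inl h0
      · exact Or.inr h1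
      · exfalso
        rw [hcard] at h
        have : (Finset.univ.filter (fun x => fstar x = 2)).card = 0 := by exact_mod_cast h
        rw [Finset.card_eq_zero, Finset.filter_eq_empty_iff] at this
        exact this (Finset.mem_univ x) h2
    · exact absurd h (ne_of_gt hNpos)
  · intro h
    left
    rw [hcard]
    norm_cast
    rw [Finset.card_eq_zero, Finset.filter_eq_empty_iff]
    intro x _ h2
    rcases h x with h0 | h1
    · norm_num [h2] at h0
    · rw [h2] at h1; norm_num at h1
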